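/- Let q ≥ 2, f, g : F_2^n → Z_q, ζ = exp(2πi/q). Define the (normalized) nega-Hadamard transform N_f(u) = 2^{-n/2} Σ_{x ∈ F_2^n} ζ^{f(x)} (-1)^{u·x} i^{wt(x)}, where wt(x) is the Hamming weight of x, and the nega-crosscorrelation C^n_{f,g}(z) = Σ_{x ∈ F_2^n} ζ^{f(x+z) - g(x)} (-1)^{x·z}. Then for all z ∈ F_2^n: Σ_{u ∈ F_2^n} N_f(u) · conj(N_g(u)) · (-1)^{u·z} = i^{wt(z)} · C^n_{f,g}(z). -/

import Mathlib

open Complex Finset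

noncomputable section

/-- `ζ_q = exp(2πi/q)`. -/
def zetaC (q : ℕ) : ℂ := Complex.exp (2 * Real.pi * Complex.I / q)

/-- Hamming weight of a binary vector. -/
def wtv {n : ℕ} (x : Fin n → ZMod 2) : ℕ := ∑ j, (x j).val

/-- `(-1)^{u·x}` where `u·x` is the dot product over `F_2`. -/
def chr {n : ℕ} (u x : Fin n → ZMod 2) : ℂ := (-1 : ℂ) ^ (∑ j, u j * x j : ZMod 2).val

/-- `2^{-n/2}` as a complex number. -/
def nrm (n : ℕ) : ℂ := (((2 : ℝ) ^ (-(n : ℝ) / 2) : ℝ) : ℂ)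

/-- The nega-Hadamard transform `N_f(u) = 2^{-n/2} Σ_x ζ^{f(x)} (-1)^{u·x} i^{wt(x)}`. -/
def negaH {n q : ℕ} (f : (Fin n → ZMod 2) → ZMod q) (u : Fin n → ZMod 2) : ℂ :=
  nrm n * ∑ x, zetaC q ^ (f x).val * chr u x * Complex.I ^ wtv x

/-- The nega-crosscorrelation `C^n_{f,g}(z) = Σ_x ζ^{f(x+z) - g(x)} (-1)^{x·z}`. -/
def negaCrossC {n q : ℕ} (f g : (Fin n → ZMod 2) → ZMod q) (z : Fin n → ZMod 2) : ℂ :=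
  ∑ x, zetaC q ^ (f (x + z) - g x).val * chr x z

section Aux

lemma zmod2_cases (a : ZMod 2) : a = 0 ∨ a = 1 := by
  fin_cases a
  · exact Or.inl rfl
  · exact Or.inr rfl

lemma two_torsion {n : ℕ} (w : Fin n → ZMod 2) : w + w = 0 :=
  funext fun j => by simpa using CharTwo.add_self_eq_zero (w j)

lemma neg_one_val_add (a b : ZMod 2) :
    ((-1:ℂ))^((a+b).val) = (-1)^a.val * (-1)^b.val := by
  rcases zmod2_cases a with rfl|rfl <;> rcases zmod2_cases b with rfl|rfl <;>
    simp [show ((1:ZMod 2)+1).val = 0 from rfl, show ((1:ZMod 2)).val = 1 from rfl,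
      show ((0:ZMod 2)+1).val = 1 from rfl, show ((1:ZMod 2)+0).val = 1 from rfl]

lemma neg_one_pow_sum {ι : Type*} (s : Finset ι) (F : ι → ZMod 2) :
    ((-1:ℂ))^((∑ j ∈ s, F j).val) = ∏ j ∈ s, (-1:ℂ)^((F j).val) := by
  induction s using Finset.cons_induction with
  | empty => simp
  | cons j s hj ih => rw [Finset.sum_cons, Finset.prod_cons, neg_one_val_add, ih]

lemma chr_prod {n : ℕ} (u x : Fin n → ZMod 2) :
    chr u x = ∏ j, (-1:ℂ)^((u j * x j).val) := neg_one_pow_sum univ _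

lemma chr_add_right {n : ℕ} (u x y : Fin n → ZMod 2) :
    chr u (x + y) = chr u x * chr u y := by
  unfold chr
  rw [show (∑ j, u j * (x + y) j) = (∑ j, u j * x j) + ∑ j, u j * y j by
    simp [mul_add, Finset.sum_add_distrib], neg_one_val_add]

lemma conj_chr {n : ℕ} (u x : Fin n → ZMod 2) :
    (starRingEnd ℂ) (chr u x) = chr u x := by
  unfold chr; rw [map_pow, map_neg, map_one]

lemma sum_chr {n : ℕ} (w : Fin n → ZMod 2) :
    ∑ u : Fin n → ZMod 2, chr u w = if w = 0 then (2:ℂ)^n else 0 := by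
  have hps := Finset.prod_univ_sum (t := fun _ : Fin n => (univ : Finset (ZMod 2)))
    (f := fun j a => (-1:ℂ)^((a * w j).val))
  rw [Fintype.piFinset_univ] at hps
  have h1 : ∑ u : Fin n → ZMod 2, chr u w
      = ∏ j, ∑ a : ZMod 2, (-1:ℂ)^((a * w j).val) := by
    rw [hps]; exact Finset.sum_congr rfl fun u _ => chr_prod u w
  rw [h1]
  have h2 : ∀ j, (∑ a : ZMod 2, (-1:ℂ)^((a * w j).val))
      = if w j = 0 then 2 else 0 := by
    intro j
    rw [show (∑ a : ZMod 2, (-1:ℂ)^((a * w j).val))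
        = (-1:ℂ)^(((0:ZMod 2) * w j).val) + (-1:ℂ)^(((1:ZMod 2) * w j).val) from
      Fin.sum_univ_two _]
    rcases zmod2_cases (w j) with h|h <;> rw [h]
    · norm_num
    · rw [if_neg (by decide)]
      norm_num [show ((1:ZMod 2)).val = 1 from rfl]
  rw [Finset.prod_congr rfl fun j _ => h2 j]
  by_cases hw : w = 0
  · subst hw; simp
  · rw [if_neg hw]
    obtain ⟨j, hj⟩ : ∃ j, w j ≠ 0 := by
      by_contra h; push_neg at h; exact hw (funext h)
    exact Finset.prod_eq_zero (Finset.mem_univ j) (by rw [if_neg hj])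

variable {q : ℕ}

lemma zeta_pow_q (hq : q ≠ 0) : zetaC q ^ q = 1 := by
  unfold zetaC
  rw [← Complex.exp_nat_mul]
  rw [show (q:ℂ) * (2 * Real.pi * Complex.I / q) = 2 * Real.pi * Complex.I by
    have : (q:ℂ) ≠ 0 := Nat.cast_ne_zero.mpr hq
    field_simp]
  exact Complex.exp_two_pi_mul_I

lemma abs_zeta (q : ℕ) : ‖zetaC q‖ = 1 := by
  unfold zetaC
  rw [show (2 * Real.pi * Complex.I / q : ℂ) = ((2 * Real.pi / q : ℝ) : ℂ) * Complex.I by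
    push_cast; ring]
  exact Complex.norm_exp_ofReal_mul_I _

lemma zeta_pow_mod (hq : q ≠ 0) (m : ℕ) : zetaC q ^ (m % q) = zetaC q ^ m := by
  conv_rhs => rw [← Nat.mod_add_div m q]
  rw [pow_add, pow_mul, zeta_pow_q hq, one_pow, mul_one]

lemma zeta_val_add (hq : 2 ≤ q) (a b : ZMod q) :
    zetaC q ^ (a + b).val = zetaC q ^ a.val * zetaC q ^ b.val := by
  haveI : NeZero q := ⟨by omega⟩
  rw [ZMod.val_add, zeta_pow_mod (by omega), pow_add]

lemma conj_zeta_pow_mul (m : ℕ) :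
    (starRingEnd ℂ) (zetaC q ^ m) * zetaC q ^ m = 1 := by
  rw [← Complex.normSq_eq_conj_mul_self]
  rw [Complex.normSq_eq_norm_sq, norm_pow, abs_zeta]
  norm_num

lemma zeta_val_sub (hq : 2 ≤ q) (a b : ZMod q) :
    zetaC q ^ a.val * (starRingEnd ℂ) (zetaC q ^ b.val) = zetaC q ^ (a - b).val := by
  have h := zeta_val_add hq (a - b) b
  rw [sub_add_cancel] at h
  calc zetaC q ^ a.val * (starRingEnd ℂ) (zetaC q ^ b.val)
      = zetaC q ^ (a-b).val * (zetaC q ^ b.val * (starRingEnd ℂ) (zetaC q ^ b.val)) := by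
        rw [← mul_assoc, ← h]
    _ = zetaC q ^ (a-b).val := by
        rw [mul_comm (zetaC q ^ b.val), conj_zeta_pow_mul, mul_one]

lemma I_coord (a c : ZMod 2) :
    Complex.I ^ a.val * (starRingEnd ℂ) (Complex.I ^ (a + c).val)
      = Complex.I ^ c.val * (-1:ℂ) ^ (((a + c) * c).val) := by
  rcases zmod2_cases a with rfl|rfl <;> rcases zmod2_cases c with rfl|rfl <;>
    simp [show ((1:ZMod 2)+1).val = 0 from rfl, show ((1:ZMod 2)).val = 1 from rfl,
      show ((0:ZMod 2)+1).val = 1 from rfl, show ((1:ZMod 2)+0).val = 1 from rfl,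
      show (((1:ZMod 2)+1)*1).val = 0 from rfl, show (((0:ZMod 2)+1)*1).val = 1 from rfl,
      Complex.conj_I]

lemma I_pow_wtv {n : ℕ} (x : Fin n → ZMod 2) :
    Complex.I ^ wtv x = ∏ j, Complex.I ^ ((x j).val) := by
  unfold wtv; rw [Finset.prod_pow_eq_pow_sum]

lemma I_part {n : ℕ} (x z : Fin n → ZMod 2) :
    Complex.I ^ wtv x * (starRingEnd ℂ) (Complex.I ^ wtv (x + z))
      = Complex.I ^ wtv z * chr (x + z) z := by
  rw [I_pow_wtv, I_pow_wtv, I_pow_wtv, map_prod, chr_prod, ← Finset.prod_mul_distrib,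
    ← Finset.prod_mul_distrib]
  exact Finset.prod_congr rfl fun j _ => I_coord (x j) (z j)

lemma nrm_sq (n : ℕ) : nrm n * nrm n * (2:ℂ)^n = 1 := by
  unfold nrm
  rw [← Complex.ofReal_mul, ← Real.rpow_add (by norm_num)]
  rw [show (-(n:ℝ)/2 + -(n:ℝ)/2) = -(n:ℝ) by ring]
  rw [Real.rpow_neg (by norm_num), Real.rpow_natCast]
  push_cast
  rw [inv_mul_cancel₀]
  exact pow_ne_zero _ two_ne_zero

end Aux

/-- nega-crosscorrelation and the nega-Hadamard transform. -/
theorem negacrosscorrelation_negahadamard {n q : ℕ} (hq : 2 ≤ q)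
    (f g : (Fin n → ZMod 2) → ZMod q) (z : Fin n → ZMod 2) :
    ∑ u : Fin n → ZMod 2, negaH f u * (starRingEnd ℂ) (negaH g u) * chr u z =
      Complex.I ^ wtv z * negaCrossC f g z := by
  set F : (Fin n → ZMod 2) → ℂ := fun x => zetaC q ^ (f x).val * Complex.I ^ wtv x with hF
  set G : (Fin n → ZMod 2) → ℂ := fun y => zetaC q ^ (g y).val * Complex.I ^ wtv y with hG
  have step1 : ∀ u : Fin n → ZMod 2,
      negaH f u * (starRingEnd ℂ) (negaH g u) * chr u z
        = ∑ x : Fin n → ZMod 2, ∑ y : Fin n → ZMod 2,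
            nrm n * nrm n * (F x * (starRingEnd ℂ) (G y)) * chr u (x + y + z) := by
    intro u
    unfold negaH
    rw [map_mul, map_sum]
    have hc : (starRingEnd ℂ) (nrm n) = nrm n := by
      unfold nrm; exact Complex.conj_ofReal _
    have e1 : (∑ x, zetaC q ^ (f x).val * chr u x * Complex.I ^ wtv x)
        = ∑ x, F x * chr u x :=
      Finset.sum_congr rfl fun x _ => by rw [hF]; ring
    have e2 : (∑ y, (starRingEnd ℂ) (zetaC q ^ (g y).val * chr u y * Complex.I ^ wtv y))
        = ∑ y, (starRingEnd ℂ) (G y) * chr u y :=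
      Finset.sum_congr rfl fun y _ => by
        rw [hG]; simp only [map_mul, conj_chr]; ring
    rw [hc, e1, e2]
    rw [show nrm n * (∑ x, F x * chr u x) * (nrm n * ∑ y, (starRingEnd ℂ) (G y) * chr u y)
          * chr u z
        = nrm n * nrm n * (((∑ x, F x * chr u x) * ∑ y, (starRingEnd ℂ) (G y) * chr u y)
          * chr u z) by ring]
    rw [Finset.sum_mul_sum, Finset.sum_mul, Finset.mul_sum]
    refine Finset.sum_congr rfl fun x _ => ?_
    rw [Finset.sum_mul, Finset.mul_sum]
    refine Finset.sum_congr rfl fun y _ => ?_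
    rw [chr_add_right, chr_add_right]
    ring
  rw [Finset.sum_congr rfl fun u _ => step1 u]
  rw [Finset.sum_comm]
  have step2 : ∀ x : Fin n → ZMod 2,
      (∑ u : Fin n → ZMod 2, ∑ y : Fin n → ZMod 2,
          nrm n * nrm n * (F x * (starRingEnd ℂ) (G y)) * chr u (x + y + z))
        = F x * (starRingEnd ℂ) (G (x + z)) := by
    intro x
    rw [Finset.sum_comm]
    have inner : ∀ y : Fin n → ZMod 2,
        (∑ u : Fin n → ZMod 2,
            nrm n * nrm n * (F x * (starRingEnd ℂ) (G y)) * chr u (x + y + z))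
          = if y = x + z then nrm n * nrm n * (F x * (starRingEnd ℂ) (G y)) * (2:ℂ)^n
            else 0 := by
      intro y
      rw [← Finset.mul_sum, sum_chr]
      have hiff : (x + y + z = 0) ↔ (y = x + z) := by
        constructor
        · intro h
          have h2 : x + z + (x + y + z) = y := by
            rw [show x + z + (x + y + z) = (x + x) + (z + z) + y by abel,
              two_torsion, two_torsion, zero_add, zero_add]
          rw [h, add_zero] at h2
          exact h2.symm
        · rintro rfl
          rw [show x + (x + z) + z = (x + x) + (z + z) by abel,
            two_torsion, two_torsion, zero_add]
      simp only [hiff]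
      split <;> simp [mul_comm]
    rw [Finset.sum_congr rfl fun y _ => inner y]
    rw [Finset.sum_ite_eq' univ (x + z)
      (fun y => nrm n * nrm n * (F x * (starRingEnd ℂ) (G y)) * (2:ℂ)^n)]
    rw [if_pos (Finset.mem_univ _)]
    rw [show nrm n * nrm n * (F x * (starRingEnd ℂ) (G (x+z))) * (2:ℂ)^n
        = nrm n * nrm n * (2:ℂ)^n * (F x * (starRingEnd ℂ) (G (x+z))) by ring,
      nrm_sq, one_mul]
  rw [Finset.sum_congr rfl fun x _ => step2 x]
  unfold negaCrossC
  rw [Finset.mul_sum]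
  refine Fintype.sum_equiv (Equiv.addRight z) _ _ fun x => ?_
  simp only [Equiv.coe_addRight]
  have hxz : x + z + z = x := by
    rw [add_assoc, two_torsion, add_zero]
  rw [hxz]
  rw [hF, hG]
  simp only [map_mul]
  rw [show zetaC q ^ (f x).val * Complex.I ^ wtv x *
      ((starRingEnd ℂ) (zetaC q ^ (g (x+z)).val) * (starRingEnd ℂ) (Complex.I ^ wtv (x+z)))
    = (zetaC q ^ (f x).val * (starRingEnd ℂ) (zetaC q ^ (g (x+z)).val)) *
      (Complex.I ^ wtv x * (starRingEnd ℂ) (Complex.I ^ wtv (x+z))) by ring]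
  rw [zeta_val_sub hq, I_part]
  ring

end
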